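/- arXiv:2104.08609 — 2 statements merged into one kernel-verified Lean document; each statement's English description precedes it below -/
import Mathlib

section
/- Let μ be a valuation on K̄[x] with K̄ algebraically closed, and let (a,δ), (a',δ') be pairs with δ = μ(x−a), δ' = μ(x−a'). The monomial valuations μ_{a,δ} and μ_{a',δ'} are equal if and only if δ = δ' and μ(a−a') ≥ δ. -/
/-!
Shifting coordinates to `b`, the truncation of `μ` at `X - b` is the monomial valuation
`min_i v(cᵢ) + i δ` evaluated on the Taylor coefficients `cᵢ` of `p` at `b`. Re-centring from
`a` to `a'` expands each `(X - a)^i` binomially in powers of `X - a'` with coefficients divisible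
by powers of `a - a'`, so it can only raise this minimum when `v(a - a') ≥ δ`; by symmetry it
leaves it unchanged. Conversely, evaluating both truncations on `X - a` and `X - a'` gives
`δ = min(v(a - a'), δ')` and `δ' = min(v(a - a'), δ)`.
-/

open Polynomial

variable {K : Type*} [Field K] {Γ : Type*} [AddCommGroup Γ] [LinearOrder Γ] [IsOrderedAddMonoid Γ]

/-- The `i`-th coefficient of the `q`-expansion of `f`. -/
noncomputable def qCoeff (q f : Polynomial K) (i : ℕ) : Polynomial K :=
  f / q ^ i % q

/-- The truncation `ν_q` of `w` at `q` :
`ν_q(f) = min_i ν(f_i q^i)` over the `q`-expansion `f = Σ f_i q^i`. -/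
noncomputable def trunc (w : Polynomial K → WithTop Γ) (q f : Polynomial K) : WithTop Γ :=
  (Finset.range (f.natDegree + 1)).inf fun i => w (qCoeff q f i * q ^ i)

/-- `b` is an admissible index in the definition of `ε(f)`. -/
def ValidIdx (w : Polynomial K → WithTop Γ) (f : Polynomial K) (b : ℕ) : Prop :=
  1 ≤ b ∧ b ≤ f.natDegree ∧ w f ≠ ⊤ ∧ w (Polynomial.hasseDeriv b f) ≠ ⊤

/-- `(w(g) - w(∂_c g))/c ≤ (w(f) - w(∂_b f))/b`, written multiplicatively
(cross-multiplied) to stay inside `WithTop Γ`. -/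
def RatioLE (w : Polynomial K → WithTop Γ) (g : Polynomial K) (c : ℕ)
    (f : Polynomial K) (b : ℕ) : Prop :=
  b • w g + c • w (Polynomial.hasseDeriv b f) ≤ c • w f + b • w (Polynomial.hasseDeriv c g)

/-- `f` is a generator of the support of `w`. -/
def IsGenSupp (w : Polynomial K → WithTop Γ) (f : Polynomial K) : Prop :=
  ∀ g, w g = ⊤ ↔ f ∣ g

/-- `ε(f) ≥ ε(Q)` (for the valuation `w`), taking the conventions
`ε(f) = -∞` if `deg f = 0` (more generally, if the defining set is empty) and
`ε(f) = ∞` if `f` generates the support of `w`. -/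
def EpsGE (w : Polynomial K → WithTop Γ) (f Q : Polynomial K) : Prop :=
  IsGenSupp w f ∨
    (¬ IsGenSupp w Q ∧
      ((∀ c, ¬ ValidIdx w Q c) ∨
        ∃ b, ValidIdx w f b ∧ ∀ c, ValidIdx w Q c → RatioLE w Q c f b))

/-- `Q` is a key polynomial for `w` : `Q` is monic and
`ε(f) ≥ ε(Q)` implies `deg f ≥ deg Q`. -/
def IsKeyPoly (w : Polynomial K → WithTop Γ) (Q : Polynomial K) : Prop :=
  Q.Monic ∧ ∀ f : Polynomial K, f ≠ 0 → EpsGE w f Q → Q.natDegree ≤ f.natDegree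

theorem AddValuation.map_natCast_nonneg {R Γ₀ : Type*} [Ring R]
    [LinearOrderedAddCommMonoidWithTop Γ₀]
    (v : AddValuation R Γ₀) (n : ℕ) : 0 ≤ v n := by
  simpa using v.map_le_sum (s := Finset.range n) (f := fun _ => 1) (by simp)

namespace Polynomial

theorem taylor_X_sub_C_pow (b : K) (n : ℕ) : taylor b ((X - C b) ^ n) = X ^ n := by
  rw [taylor_pow, map_sub, taylor_X, taylor_C, add_sub_cancel_right]

theorem coeff_taylor_modByMonic_X_sub_C_pow (b : K) (p : K[X]) (i : ℕ) :
    (taylor b (p %ₘ (X - C b) ^ i)).coeff i = 0 := by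
  apply coeff_eq_zero_of_degree_lt
  have h := degree_modByMonic_lt p ((monic_X_sub_C b).pow i)
  rwa [degree_pow, degree_X_sub_C, nsmul_one, ← degree_taylor _ b] at h

theorem coeff_taylor_eq_sum (r : K) (g : K[X]) (j : ℕ) :
    (taylor r g).coeff j =
      ∑ i ∈ Finset.range (g.natDegree + 1), (i.choose j : K) * g.coeff i * r ^ (i - j) := by
  rw [taylor_coeff, hasseDeriv_apply, Polynomial.sum_def, eval_finsetSum]
  rw [Finset.sum_subset supp_subset_range_natDegree_succ
    (fun i _ hi => by simp [Polynomial.notMem_support_iff.mp hi])]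
  simp [eval_monomial, mul_assoc]

end Polynomial

/-- The paper's monomial valuation is `μ_{a,δ}(f) = monomialVal v δ (taylor a f)`. -/
noncomputable def monomialVal (v : AddValuation K (WithTop Γ)) (δ : WithTop Γ) (g : K[X]) :
    WithTop Γ :=
  (Finset.range (g.natDegree + 1)).inf fun i => v (g.coeff i) + i • δ

section monomialVal

variable (v : AddValuation K (WithTop Γ)) {δ : WithTop Γ}

theorem monomialVal_le_coeff_taylor {r : K} (hr : δ ≤ v r) (g : K[X]) (j : ℕ) :
    monomialVal v δ g ≤ v ((taylor r g).coeff j) + j • δ := by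
  set s := Finset.range (g.natDegree + 1)
  set t : ℕ → K := fun i => (i.choose j : K) * g.coeff i * r ^ (i - j)
  have h_term : ∀ i ∈ s, monomialVal v δ g ≤ v (t i) + j • δ := by
    intro i hi
    rcases lt_or_ge i j with hij | hji
    · simp [t, Nat.choose_eq_zero_of_lt hij]
    calc monomialVal v δ g ≤ v (g.coeff i) + i • δ := Finset.inf_le hi
      _ = v (g.coeff i) + ((i - j) • δ + j • δ) := by rw [← add_nsmul, Nat.sub_add_cancel hji]
      _ ≤ v (i.choose j : K) + v (g.coeff i) + ((i - j) • v r + j • δ) := by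
        gcongr
        exact le_add_of_nonneg_left (v.map_natCast_nonneg _)
      _ = v (t i) + j • δ := by simp only [t, v.map_mul, v.map_pow, add_assoc]
  obtain ⟨i₀, hi₀, h_min⟩ := Finset.exists_mem_eq_inf s Finset.nonempty_range_add_one
    fun i => v (t i)
  calc monomialVal v δ g ≤ v (t i₀) + j • δ := h_term i₀ hi₀
    _ ≤ v ((taylor r g).coeff j) + j • δ := by
      gcongr
      rw [coeff_taylor_eq_sum, ← h_min]
      exact v.map_le_sum fun i hi => Finset.inf_le hi

theorem monomialVal_le_taylor {r : K} (hr : δ ≤ v r) (g : K[X]) :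
    monomialVal v δ g ≤ monomialVal v δ (taylor r g) :=
  Finset.le_inf fun j _ => monomialVal_le_coeff_taylor v hr g j

theorem monomialVal_taylor {r : K} (hr : δ ≤ v r) (g : K[X]) :
    monomialVal v δ (taylor r g) = monomialVal v δ g := by
  refine le_antisymm ?_ (monomialVal_le_taylor v hr g)
  simpa [taylor_taylor] using
    monomialVal_le_taylor v (r := -r) (by rwa [v.map_neg]) (taylor r g)

theorem monomialVal_X_add_C (c : K) : monomialVal v δ (X + C c) = v c ⊓ δ := by
  simp [monomialVal, Finset.range_add_one, inf_comm]

end monomialVal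

theorem qCoeff_X_sub_C (b : K) (p : K[X]) (i : ℕ) :
    qCoeff (X - C b) p i = C ((taylor b p).coeff i) := by
  have hm := monic_X_sub_C b
  rw [qCoeff, ← divByMonic_eq_div _ (hm.pow i), ← modByMonic_eq_mod _ hm,
    modByMonic_X_sub_C_eq_C_eval]
  -- Write `p = r + (X - b)^i q` with `deg r < i`: after the shift, the `i`-th coefficient
  -- of `p` is the constant term `q(b)` of the quotient.
  conv_rhs => rw [← modByMonic_add_div p ((X - C b) ^ i)]
  rw [map_add, taylor_mul, taylor_X_sub_C_pow, coeff_add, coeff_taylor_modByMonic_X_sub_C_pow,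
    zero_add, coeff_X_pow_mul', if_pos le_rfl, Nat.sub_self, taylor_coeff_zero]

theorem trunc_X_sub_C (μ : AddValuation K[X] (WithTop Γ)) (b : K) (p : K[X]) :
    trunc μ (X - C b) p = monomialVal (μ.comap C) (μ (X - C b)) (taylor b p) := by
  rw [trunc, monomialVal, natDegree_taylor]
  refine Finset.inf_congr rfl fun i _ => ?_
  rw [qCoeff_X_sub_C, μ.map_mul, μ.map_pow]
  rfl

theorem trunc_X_sub_C_X_sub_C (μ : AddValuation K[X] (WithTop Γ)) (b c : K) :
    trunc μ (X - C b) (X - C c) = μ (C b - C c) ⊓ μ (X - C b) := by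
  rw [trunc_X_sub_C, LinearMap.map_sub, taylor_X, taylor_C, add_sub_assoc, ← C_sub,
    monomialVal_X_add_C]
  rfl

theorem stmt3_general (μ : AddValuation (Polynomial K) (WithTop Γ)) (a a' : K) :
    (∀ p : Polynomial K, trunc (⇑μ) (X - C a) p = trunc (⇑μ) (X - C a') p) ↔
      (μ (X - C a) = μ (X - C a') ∧ μ (X - C a) ≤ μ (C a - C a')) := by
  have h_swap : μ (C a' - C a) = μ (C a - C a') := μ.map_sub_swap _ _
  constructor
  · intro h
    have h₁ := h (X - C a)
    have h₂ := h (X - C a')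
    simp only [trunc_X_sub_C_X_sub_C, sub_self, μ.map_zero, top_inf_eq, h_swap] at h₁ h₂
    have h_eq : μ (X - C a) = μ (X - C a') :=
      le_antisymm (h₁ ▸ inf_le_right) (h₂ ▸ inf_le_right)
    exact ⟨h_eq, h_eq ▸ h₂ ▸ inf_le_left⟩
  · rintro ⟨h_eq, h_le⟩ p
    have h_shift : taylor a' p = taylor (a' - a) (taylor a p) := by
      rw [taylor_taylor, sub_add_cancel]
    rw [trunc_X_sub_C, trunc_X_sub_C, ← h_eq, h_shift, monomialVal_taylor _ (r := a' - a)]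
    show μ (X - C a) ≤ μ (C (a' - a))
    rwa [C_sub, h_swap]

/-- With `δ = μ(x-a)` and `δ' = μ(x-a')`, the monomial valuations
`μ_{a,δ}` and `μ_{a',δ'}` coincide iff `δ = δ'` and `μ(a-a') ≥ δ`. -/
theorem stmt3 [IsAlgClosed K] (μ : AddValuation (Polynomial K) (WithTop Γ)) (a a' : K) :
    (∀ p : Polynomial K, trunc (⇑μ) (X - C a) p = trunc (⇑μ) (X - C a') p) ↔
      (μ (X - C a) = μ (X - C a') ∧ μ (X - C a) ≤ μ (C a - C a')) :=
  stmt3_general μ a a'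
end

section
/- Let ν be a valuation on K[x] and Q a key polynomial for ν. Suppose there exist e ∈ ℕ and h ∈ K[x] with deg(h) < deg(Q) and ν(Q^e) = ν(h). Then the residue of r = Q^e/h under the valuation ν_Q (extended to K(x)) is transcendental over the residue field Kν. -/
/-!
For `f ≠ 0` let `ε(f)` be the largest ratio `(ν f - ν (∂_b f)) / b` over the Hasse derivatives
`∂_b`, and fix an index `m` at which it is attained for `Q`. Because `Q` is a key polynomial,
`ε(a) < ε(Q)` whenever `deg a < deg Q`, and the Leibniz rule extends this to products `a * b` of
two such polynomials. Write `a * b = Q * q + r` with `deg q, deg r < deg Q`: in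
`∂_m (a * b)` the term `∂_m Q * q` then has strictly smaller value than all the others, which
is incompatible with `ν (Q * q) ≤ ν (a * b)`. Hence `ν (a * b %ₘ Q) = ν (a * b) < ν (Q * q)`,
and carrying this through the `Q`-expansion gives `ν_Q (a * f) = ν a + ν_Q f` for `deg a < deg Q`.

For `S_s = ∑_{i ≤ s} a_i Q^{ei} h^{s-i}` we have `S_{s+1} = h * S_s + a_{s+1} Q^{e(s+1)}` with
`deg (h * S_s) < e (s + 1) deg Q`, so the last summand is a new top `Q`-coefficient. By induction
`ν_Q (S_s) = s ν h + min_i ν a_i = ν_Q (h^s) + min_i ν a_i`, and the hypothesis forces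
`ν a_i > 0` for all `i`.
-/

open Polynomial

variable {K : Type*} [Field K] {Γ : Type*} [AddCommGroup Γ] [LinearOrder Γ] [IsOrderedAddMonoid Γ]

theorem nsmul_lt_nsmul_of_lt_of_le {α : Type*} [AddCommMonoid α] [LinearOrder α]
    [IsOrderedCancelAddMonoid α] {x y z : α} {b c m : ℕ} (hm : m ≠ 0)
    (h₁ : c • x < b • y) (h₂ : m • y ≤ c • z) : m • x < b • z := by
  refine lt_of_nsmul_lt_nsmul_right c ?_
  calc c • m • x = m • c • x := smul_comm c m x
    _ < m • b • y := nsmul_lt_nsmul_right hm h₁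
    _ = b • m • y := smul_comm m b y
    _ ≤ b • c • z := nsmul_le_nsmul_right h₂ b
    _ = c • b • z := smul_comm b c z

theorem sum_range_mul_pow_sub_succ {R : Type*} [CommSemiring R] (c : ℕ → R) (y : R) (s : ℕ) :
    ∑ i ∈ Finset.range (s + 1 + 1), c i * y ^ (s + 1 - i) =
      y * ∑ i ∈ Finset.range (s + 1), c i * y ^ (s - i) + c (s + 1) := by
  rw [Finset.sum_range_succ, Nat.sub_self, pow_zero, mul_one, Finset.mul_sum]
  congr 1
  refine Finset.sum_congr rfl fun i hi => ?_
  rw [Nat.sub_add_comm (Finset.mem_range_succ_iff.1 hi), pow_succ]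
  ring

namespace Polynomial

variable {R : Type*} [CommRing R] {M : R[X]}

theorem add_divByMonic (hM : M.Monic) (f g : R[X]) : (f + g) /ₘ M = f /ₘ M + g /ₘ M := by
  nontriviality R
  refine (div_modByMonic_unique _ (f %ₘ M + g %ₘ M) hM ⟨?_, ?_⟩).1
  · linear_combination modByMonic_add_div f M + modByMonic_add_div g M
  · exact (degree_add_le _ _).trans_lt
      (max_lt (degree_modByMonic_lt f hM) (degree_modByMonic_lt g hM))

theorem neg_divByMonic (hM : M.Monic) (f : R[X]) : (-f) /ₘ M = -(f /ₘ M) := by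
  rw [eq_neg_iff_add_eq_zero, ← add_divByMonic hM, neg_add_cancel, zero_divByMonic]

theorem divByMonic_divByMonic_pow (hM : M.Monic) (f : R[X]) (n : ℕ) :
    f /ₘ M /ₘ M ^ n = f /ₘ M ^ (n + 1) := by
  nontriviality R
  have hMbot : M.degree ≠ ⊥ := fun h => hM.ne_zero (degree_eq_bot.1 h)
  refine (div_modByMonic_unique _ (f %ₘ M + M * (f /ₘ M %ₘ M ^ n)) (hM.pow _)
    ⟨?_, ?_⟩).1.symm
  · linear_combination modByMonic_add_div f M + M * modByMonic_add_div (f /ₘ M) (M ^ n)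
  · refine (degree_add_le _ _).trans_lt (max_lt ?_ ?_)
    · calc (f %ₘ M).degree < M.degree := degree_modByMonic_lt f hM
        _ ≤ M.degree + (M ^ n).degree :=
          le_add_of_nonneg_right (zero_le_degree_iff.2 (hM.pow n).ne_zero)
        _ = (M ^ (n + 1)).degree := by rw [pow_succ', (hM.pow n).degree_mul]
    · calc (M * (f /ₘ M %ₘ M ^ n)).degree = (f /ₘ M %ₘ M ^ n).degree + M.degree := by
            rw [mul_comm, hM.degree_mul]
        _ < (M ^ n).degree + M.degree :=
          WithBot.add_lt_add_right hMbot (degree_modByMonic_lt _ (hM.pow n))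
        _ = (M ^ (n + 1)).degree := by rw [pow_succ, hM.degree_mul]

theorem degree_divByMonic_lt_pow [Nontrivial R] {f : R[X]} (hM : M.Monic) {n : ℕ}
    (hf : f.degree < (M ^ (n + 1)).degree) : (f /ₘ M).degree < (M ^ n).degree := by
  rwa [← divByMonic_eq_zero_iff (hM.pow n), divByMonic_divByMonic_pow hM,
    divByMonic_eq_zero_iff (hM.pow _)]

end Polynomial

section Truncation

open Finset

variable {Q f g : K[X]}

theorem qCoeff_eq_modByMonic (hQ : Q.Monic) (f : K[X]) (i : ℕ) :
    qCoeff Q f i = f /ₘ Q ^ i %ₘ Q := by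
  rw [qCoeff, divByMonic_eq_div _ (hQ.pow i), modByMonic_eq_mod _ hQ]

theorem qCoeff_add (hQ : Q.Monic) (f g : K[X]) (i : ℕ) :
    qCoeff Q (f + g) i = qCoeff Q f i + qCoeff Q g i := by
  simp only [qCoeff_eq_modByMonic hQ, add_divByMonic (hQ.pow i), add_modByMonic]

theorem qCoeff_neg (hQ : Q.Monic) (f : K[X]) (i : ℕ) : qCoeff Q (-f) i = -qCoeff Q f i := by
  simp only [qCoeff_eq_modByMonic hQ, neg_divByMonic (hQ.pow i), neg_modByMonic]

theorem qCoeff_zero_eq_modByMonic (hQ : Q.Monic) (f : K[X]) : qCoeff Q f 0 = f %ₘ Q := by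
  rw [qCoeff_eq_modByMonic hQ, pow_zero, divByMonic_one]

theorem qCoeff_succ (hQ : Q.Monic) (f : K[X]) (i : ℕ) :
    qCoeff Q f (i + 1) = qCoeff Q (f /ₘ Q) i := by
  rw [qCoeff_eq_modByMonic hQ, qCoeff_eq_modByMonic hQ, divByMonic_divByMonic_pow hQ]

theorem qCoeff_eq_zero_of_natDegree_lt (hQ : Q.Monic) {i : ℕ} (h : f.natDegree < i) :
    qCoeff Q f i = 0 := by
  rw [qCoeff_eq_modByMonic hQ]
  rcases Nat.eq_zero_or_pos Q.natDegree with hQ0 | hQpos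
  · rw [eq_one_of_monic_natDegree_zero hQ hQ0, modByMonic_one]
  · rw [(divByMonic_eq_zero_iff (hQ.pow i)).2, zero_modByMonic]
    refine degree_lt_degree ?_
    rw [hQ.natDegree_pow]
    exact h.trans_le (Nat.le_mul_of_pos_right i hQpos)

variable (ν : AddValuation K[X] (WithTop Γ))

theorem trunc_zero : trunc ν Q 0 = ⊤ := by
  simp [trunc, qCoeff]

theorem trunc_le_valuation_qCoeff (hQ : Q.Monic) (f : K[X]) (i : ℕ) :
    trunc ν Q f ≤ ν (qCoeff Q f i * Q ^ i) := by
  rcases le_or_gt i f.natDegree with hi | hi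
  · exact inf_le (mem_range_succ_iff.2 hi)
  · rw [qCoeff_eq_zero_of_natDegree_lt hQ hi, zero_mul, ν.map_zero]
    exact le_top

theorem trunc_eq_inf_range (hQ : Q.Monic) {N : ℕ} (hN : f.natDegree < N) :
    trunc ν Q f = (range N).inf fun i => ν (qCoeff Q f i * Q ^ i) :=
  le_antisymm (Finset.le_inf fun i _ => trunc_le_valuation_qCoeff ν hQ f i)
    (inf_mono (range_subset_range.2 hN))

theorem trunc_eq_min (hQ : Q.Monic) (f : K[X]) :
    trunc ν Q f = min (ν (f %ₘ Q)) (ν Q + trunc ν Q (f /ₘ Q)) := by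
  have hdiv : (f /ₘ Q).natDegree < f.natDegree + 1 := by
    rw [natDegree_divByMonic f hQ]
    omega
  rw [trunc_eq_inf_range ν hQ (Nat.lt_succ_of_lt (Nat.lt_succ_self _)),
    trunc_eq_inf_range ν hQ hdiv, range_add_one', inf_insert, inf_map,
    qCoeff_zero_eq_modByMonic hQ, pow_zero, mul_one, apply_inf_eq_inf_comp_of_linearOrder
      (ν Q + ·) (fun _ _ h => add_le_add_right h _) (add_top _)]
  congr 1
  refine inf_congr rfl fun i _ => ?_
  change ν (qCoeff Q f (i + 1) * Q ^ (i + 1)) = ν Q + ν (qCoeff Q (f /ₘ Q) i * Q ^ i)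
  rw [qCoeff_succ hQ, pow_succ', mul_left_comm, ν.map_mul]

theorem trunc_add_mul (hQ : Q.Monic) {r : K[X]} (hr : r.degree < Q.degree) (g : K[X]) :
    trunc ν Q (r + Q * g) = min (ν r) (ν Q + trunc ν Q g) := by
  obtain ⟨hdiv, hmod⟩ := div_modByMonic_unique g r hQ ⟨rfl, hr⟩
  rw [trunc_eq_min ν hQ, hdiv, hmod]

theorem trunc_of_degree_lt (hQ : Q.Monic) (hf : f.degree < Q.degree) : trunc ν Q f = ν f := by
  simpa [trunc_zero] using trunc_add_mul ν hQ hf 0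

theorem min_trunc_le_trunc_add (hQ : Q.Monic) (f g : K[X]) :
    min (trunc ν Q f) (trunc ν Q g) ≤ trunc ν Q (f + g) :=
  Finset.le_inf fun i _ => by
    rw [qCoeff_add hQ, add_mul]
    exact (min_le_min (trunc_le_valuation_qCoeff ν hQ f i)
      (trunc_le_valuation_qCoeff ν hQ g i)).trans (ν.map_add _ _)

theorem trunc_neg (hQ : Q.Monic) (f : K[X]) : trunc ν Q (-f) = trunc ν Q f := by
  simp only [trunc, natDegree_neg, qCoeff_neg hQ, neg_mul, ν.map_neg]

theorem min_trunc_le_trunc_sub (hQ : Q.Monic) (f g : K[X]) :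
    min (trunc ν Q f) (trunc ν Q g) ≤ trunc ν Q (f - g) := by
  simpa [sub_eq_add_neg, trunc_neg ν hQ] using min_trunc_le_trunc_add ν hQ f (-g)

theorem trunc_add_mul_pow (hQ : Q.Monic) {c : K[X]} (hc : c.degree < Q.degree) :
    ∀ {n : ℕ} {g : K[X]}, g.degree < (Q ^ n).degree →
      trunc ν Q (g + c * Q ^ n) = min (trunc ν Q g) (ν (c * Q ^ n))
  | 0, g, hg => by
    obtain rfl : g = 0 := by simpa using hg
    rw [zero_add, pow_zero, mul_one, trunc_zero, trunc_of_degree_lt ν hQ hc, top_inf_eq]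
  | n + 1, g, hg => by
    have hsplit : g + c * Q ^ (n + 1) = g %ₘ Q + Q * (g /ₘ Q + c * Q ^ n) := by
      linear_combination -modByMonic_add_div g Q
    rw [hsplit, trunc_add_mul ν hQ (degree_modByMonic_lt g hQ),
      trunc_add_mul_pow hQ hc (degree_divByMonic_lt_pow hQ hg), trunc_eq_min ν hQ g,
      ← min_add_add_left, min_assoc, pow_succ', mul_left_comm c, ν.map_mul Q]

end Truncation

section KeyPolynomial

open Finset

variable {ν : AddValuation K[X] (WithTop Γ)} {Q f p : K[X]} {m : ℕ}

theorem IsKeyPoly.valuation_ne_top (hQ : IsKeyPoly ν Q) (hp : p ≠ 0)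
    (hpQ : p.natDegree < Q.natDegree) : ν p ≠ ⊤ := by
  intro htop
  set g := Submodule.IsPrincipal.generator (AddValuation.supp ν)
  have hgen : IsGenSupp ν g := fun x => by
    rw [← AddValuation.mem_supp_iff, ← Ideal.span_singleton_generator (AddValuation.supp ν),
      Ideal.mem_span_singleton]
  have hgp : g ∣ p := (hgen p).1 htop
  have hg : g ≠ 0 := fun hg => hp (zero_dvd_iff.1 (hg ▸ hgp))
  exact ((hQ.2 g hg (Or.inl hgen)).trans (natDegree_le_of_dvd hgp hp)).not_gt hpQ

theorem IsKeyPoly.valuation_hasseDeriv_ne_top (hQ : IsKeyPoly ν Q)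
    (hfQ : f.natDegree < Q.natDegree) {b : ℕ} (hfb : hasseDeriv b f ≠ 0) :
    ν (hasseDeriv b f) ≠ ⊤ :=
  hQ.valuation_ne_top hfb ((natDegree_hasseDeriv_le f b).trans_lt (by omega))

theorem IsKeyPoly.validIdx (hQ : IsKeyPoly ν Q) (hfQ : f.natDegree < Q.natDegree) {b : ℕ}
    (hb : 1 ≤ b) (hfb : hasseDeriv b f ≠ 0) : ValidIdx ν f b := by
  have hbf : b ≤ f.natDegree := by
    by_contra! h
    exact hfb (hasseDeriv_eq_zero_of_lt_natDegree f b h)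
  refine ⟨hb, hbf, hQ.valuation_ne_top ?_ hfQ, hQ.valuation_hasseDeriv_ne_top hfQ hfb⟩
  rintro rfl
  exact hfb (map_zero _)

theorem IsKeyPoly.exists_validIdx (hQ : IsKeyPoly ν Q) (hng : ¬IsGenSupp ν Q)
    (hd : 0 < Q.natDegree) : ∃ c, ValidIdx ν Q c := by
  by_contra! h
  exact (hQ.2 1 one_ne_zero (Or.inr ⟨hng, Or.inl h⟩)).not_gt (by rwa [natDegree_one])

theorem valuation_mul_ne_top {q : K[X]} (hp : ν p ≠ ⊤) (hq : ν q ≠ ⊤) :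
    ν (p * q) ≠ ⊤ := by
  rw [ν.map_mul]
  exact WithTop.add_ne_top.2 ⟨hp, hq⟩

/-- `ν p` in `Γ`, with junk value `0` when `ν p = ⊤`. -/
noncomputable def finVal (ν : AddValuation K[X] (WithTop Γ)) (p : K[X]) : Γ :=
  WithTop.untopD 0 (ν p)

theorem coe_finVal (h : ν p ≠ ⊤) : ((finVal ν p : Γ) : WithTop Γ) = ν p := by
  obtain ⟨x, hx⟩ := WithTop.ne_top_iff_exists.1 h
  rw [finVal, ← hx]
  rfl

theorem finVal_mul {q : K[X]} (hp : ν p ≠ ⊤) (hq : ν q ≠ ⊤) :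
    finVal ν (p * q) = finVal ν p + finVal ν q := by
  have h : ν (p * q) = ↑(finVal ν p + finVal ν q) := by
    rw [ν.map_mul, WithTop.coe_add, coe_finVal hp, coe_finVal hq]
  rw [finVal, h]
  rfl

theorem finVal_le_finVal {p q : K[X]} (hp : ν p ≠ ⊤) (hq : ν q ≠ ⊤) :
    finVal ν p ≤ finVal ν q ↔ ν p ≤ ν q := by
  rw [← WithTop.coe_le_coe, coe_finVal hp, coe_finVal hq]

/-- `ε(f)` is the largest of the ratios `hasseDrop ν f b / b` over the admissible `b`. -/
noncomputable def hasseDrop (ν : AddValuation K[X] (WithTop Γ)) (f : K[X]) (b : ℕ) : Γ :=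
  finVal ν f - finVal ν (hasseDeriv b f)

theorem hasseDrop_zero (f : K[X]) : hasseDrop ν f 0 = 0 := by
  rw [hasseDrop, hasseDeriv_zero', sub_self]

theorem ratioLE_iff {g : K[X]} {b c : ℕ} (hc : ValidIdx ν g c) (hb : ValidIdx ν f b) :
    RatioLE ν g c f b ↔ b • hasseDrop ν g c ≤ c • hasseDrop ν f b := by
  obtain ⟨-, -, hg, hgc⟩ := hc
  obtain ⟨-, -, hf, hfb⟩ := hb
  rw [RatioLE, ← coe_finVal hg, ← coe_finVal hgc, ← coe_finVal hf, ← coe_finVal hfb,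
    hasseDrop, hasseDrop, smul_sub, smul_sub, sub_le_sub_iff]
  norm_cast

/-- `m` is an admissible index realising `ε(Q)`. -/
def IsEpsIdx (ν : AddValuation K[X] (WithTop Γ)) (Q : K[X]) (m : ℕ) : Prop :=
  ValidIdx ν Q m ∧ ∀ c, ValidIdx ν Q c → m • hasseDrop ν Q c ≤ c • hasseDrop ν Q m

theorem exists_isEpsIdx (hne : ∃ c, ValidIdx ν Q c) : ∃ m, IsEpsIdx ν Q m := by
  classical
  set N := Q.natDegree.factorial
  have hs : ∀ {c}, c ∈ (Icc 1 Q.natDegree).filter (ValidIdx ν Q) ↔ ValidIdx ν Q c := by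
    intro c
    simp only [Finset.mem_filter, Finset.mem_Icc, and_iff_right_iff_imp]
    exact fun hc => ⟨hc.1, hc.2.1⟩
  have hN : ∀ {k}, ValidIdx ν Q k → k * (N / k) = N := fun hk =>
    Nat.mul_div_cancel' (Nat.dvd_factorial hk.1 hk.2.1)
  -- every admissible `c` divides `N`, so ratios `_ / c` can be compared as `(N / c) • _` in `Γ`
  obtain ⟨m, hm, hmax⟩ := exists_max_image _ (fun c => (N / c) • hasseDrop ν Q c)
    (hne.imp fun _ => hs.2)
  refine ⟨m, hs.1 hm, fun c hc =>
    le_of_nsmul_le_nsmul_right (n := N) (Nat.factorial_ne_zero _) ?_⟩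
  have h := nsmul_le_nsmul_right (hmax c (hs.2 hc)) (m * c)
  rwa [smul_smul, smul_smul, mul_assoc, hN hc, mul_comm m c, mul_assoc, hN (hs.1 hm),
    mul_comm, ← smul_smul, mul_comm, ← smul_smul] at h

theorem IsKeyPoly.nsmul_hasseDrop_lt (hQ : IsKeyPoly ν Q) (hng : ¬IsGenSupp ν Q)
    (hm : IsEpsIdx ν Q m) (hpQ : p.natDegree < Q.natDegree) {b : ℕ} (hb : 1 ≤ b)
    (hpb : hasseDeriv b p ≠ 0) : m • hasseDrop ν p b < b • hasseDrop ν Q m := by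
  have hp := hQ.validIdx hpQ hb hpb
  have hp0 : p ≠ 0 := by
    rintro rfl
    exact hpb (map_zero _)
  obtain ⟨c, hc, hlt⟩ : ∃ c, ValidIdx ν Q c ∧ ¬RatioLE ν Q c p b := by
    by_contra! h
    exact (hQ.2 p hp0 (Or.inr ⟨hng, Or.inr ⟨b, hp, h⟩⟩)).not_gt hpQ
  rw [ratioLE_iff hc hp, not_le] at hlt
  exact nsmul_lt_nsmul_of_lt_of_le (Nat.one_le_iff_ne_zero.1 hm.1.1) hlt (hm.2 c hc)

theorem IsKeyPoly.nsmul_hasseDrop_le (hQ : IsKeyPoly ν Q) (hng : ¬IsGenSupp ν Q)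
    (hm : IsEpsIdx ν Q m) (hpQ : p.natDegree < Q.natDegree) {b : ℕ}
    (hpb : hasseDeriv b p ≠ 0) : m • hasseDrop ν p b ≤ b • hasseDrop ν Q m := by
  rcases Nat.eq_zero_or_pos b with rfl | hb
  · rw [hasseDrop_zero, smul_zero, zero_smul]
  · exact (hQ.nsmul_hasseDrop_lt hng hm hpQ hb hpb).le

theorem IsEpsIdx.valuation_hasseDeriv_ne_top (hQ : IsKeyPoly ν Q) (hm : IsEpsIdx ν Q m)
    {j : ℕ} (hj : hasseDeriv j Q ≠ 0) : ν (hasseDeriv j Q) ≠ ⊤ := by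
  rcases Nat.eq_zero_or_pos j with rfl | hj0
  · rw [hasseDeriv_zero']
    exact hm.1.2.2.1
  · exact hQ.valuation_ne_top hj
      ((natDegree_hasseDeriv_le Q j).trans_lt (Nat.sub_lt (hm.1.1.trans hm.1.2.1) hj0))

theorem IsEpsIdx.nsmul_hasseDrop_le (hQ : IsKeyPoly ν Q) (hm : IsEpsIdx ν Q m) {j : ℕ}
    (hj : hasseDeriv j Q ≠ 0) : m • hasseDrop ν Q j ≤ j • hasseDrop ν Q m := by
  rcases Nat.eq_zero_or_pos j with rfl | hj0
  · rw [hasseDrop_zero, smul_zero, zero_smul]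
  · have hjle : j ≤ Q.natDegree := by
      by_contra! h
      exact hj (hasseDeriv_eq_zero_of_lt_natDegree Q j h)
    exact hm.2 j ⟨hj0, hjle, hm.1.2.2.1, hm.valuation_hasseDeriv_ne_top hQ hj⟩

theorem IsKeyPoly.nsmul_hasseDrop_mul_lt (hQ : IsKeyPoly ν Q) (hng : ¬IsGenSupp ν Q)
    (hm : IsEpsIdx ν Q m) {a b : K[X]} (ha : a ≠ 0) (haQ : a.natDegree < Q.natDegree)
    (hb : b ≠ 0) (hbQ : b.natDegree < Q.natDegree) {k : ℕ} (hk : 1 ≤ k)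
    (hab : ν (hasseDeriv k (a * b)) ≠ ⊤) :
    m • hasseDrop ν (a * b) k < k • hasseDrop ν Q m := by
  obtain ⟨⟨i, j⟩, hij, hmin⟩ := exists_mem_eq_inf (antidiagonal k) ⟨(0, k), by simp⟩
    fun x => ν (hasseDeriv x.1 a * hasseDeriv x.2 b)
  rw [HasAntidiagonal.mem_antidiagonal] at hij
  have hle : ν (hasseDeriv i a * hasseDeriv j b) ≤ ν (hasseDeriv k (a * b)) := by
    rw [hasseDeriv_mul, ← hmin]
    exact ν.map_le_sum fun x hx => inf_le hx
  have hfin := ne_top_of_le_ne_top hab hle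
  rw [ν.map_mul, WithTop.add_ne_top] at hfin
  have hia : hasseDeriv i a ≠ 0 := fun h => hfin.1 (by rw [h, ν.map_zero])
  have hjb : hasseDeriv j b ≠ 0 := fun h => hfin.2 (by rw [h, ν.map_zero])
  have hdrop : hasseDrop ν (a * b) k ≤ hasseDrop ν a i + hasseDrop ν b j := by
    have hle' : finVal ν (hasseDeriv i a) + finVal ν (hasseDeriv j b) ≤
        finVal ν (hasseDeriv k (a * b)) := by
      rw [← WithTop.coe_le_coe, WithTop.coe_add, coe_finVal hfin.1, coe_finVal hfin.2,
        coe_finVal hab, ← ν.map_mul]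
      exact hle
    rw [hasseDrop, hasseDrop, hasseDrop, finVal_mul (hQ.valuation_ne_top ha haQ)
      (hQ.valuation_ne_top hb hbQ)]
    grind
  have ha' := hQ.nsmul_hasseDrop_le hng hm haQ hia
  have hb' := hQ.nsmul_hasseDrop_le hng hm hbQ hjb
  calc m • hasseDrop ν (a * b) k ≤ m • hasseDrop ν a i + m • hasseDrop ν b j := by
        rw [← smul_add]
        exact nsmul_le_nsmul_right hdrop m
    _ < i • hasseDrop ν Q m + j • hasseDrop ν Q m := by
        rcases Nat.eq_zero_or_pos i with rfl | hi
        · exact add_lt_add_of_le_of_lt ha' (hQ.nsmul_hasseDrop_lt hng hm hbQ (by omega) hjb)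
        · exact add_lt_add_of_lt_of_le (hQ.nsmul_hasseDrop_lt hng hm haQ hi hia) hb'
    _ = k • hasseDrop ν Q m := by rw [← add_nsmul, hij]

theorem IsKeyPoly.lt_valuation_hasseDeriv_mul_hasseDeriv (hQ : IsKeyPoly ν Q)
    (hng : ¬IsGenSupp ν Q) (hm : IsEpsIdx ν Q m) (hp : p ≠ 0)
    (hpQ : p.natDegree < Q.natDegree) {i j : ℕ} (hi : 1 ≤ i) (hji : j + i = m) :
    ν (hasseDeriv m Q) + ν p < ν (hasseDeriv j Q * hasseDeriv i p) := by
  have hmQ : ν (hasseDeriv m Q) ≠ ⊤ := hm.1.2.2.2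
  have hp' : ν p ≠ ⊤ := hQ.valuation_ne_top hp hpQ
  have hlt_top : ν (hasseDeriv m Q) + ν p < ⊤ :=
    WithTop.lt_top_iff_ne_top.2 (WithTop.add_ne_top.2 ⟨hmQ, hp'⟩)
  rcases eq_or_ne (hasseDeriv j Q) 0 with hjQ | hjQ
  · rwa [hjQ, zero_mul, ν.map_zero]
  rcases eq_or_ne (hasseDeriv i p) 0 with hip | hip
  · rwa [hip, mul_zero, ν.map_zero]
  have hsum : hasseDrop ν p i + hasseDrop ν Q j < hasseDrop ν Q m := by
    refine lt_of_nsmul_lt_nsmul_right m ?_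
    calc m • (hasseDrop ν p i + hasseDrop ν Q j)
        = m • hasseDrop ν p i + m • hasseDrop ν Q j := smul_add _ _ _
      _ < i • hasseDrop ν Q m + j • hasseDrop ν Q m :=
        add_lt_add_of_lt_of_le (hQ.nsmul_hasseDrop_lt hng hm hpQ hi hip)
          (hm.nsmul_hasseDrop_le hQ hjQ)
      _ = m • hasseDrop ν Q m := by rw [← add_nsmul, ← hji, add_comm]
  rw [ν.map_mul, ← coe_finVal hmQ, ← coe_finVal hp',
    ← coe_finVal (hm.valuation_hasseDeriv_ne_top hQ hjQ),
    ← coe_finVal (hQ.valuation_hasseDeriv_ne_top hpQ hip), ← WithTop.coe_add,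
    ← WithTop.coe_add, WithTop.coe_lt_coe]
  simp only [hasseDrop] at hsum
  grind

theorem IsKeyPoly.valuation_hasseDeriv_mul_eq (hQ : IsKeyPoly ν Q) (hng : ¬IsGenSupp ν Q)
    (hm : IsEpsIdx ν Q m) (hp : p ≠ 0) (hpQ : p.natDegree < Q.natDegree) :
    ν (hasseDeriv m (Q * p)) = ν (hasseDeriv m Q) + ν p := by
  have hm0 : ((m, 0) : ℕ × ℕ) ∈ antidiagonal m :=
    HasAntidiagonal.mem_antidiagonal.2 (add_zero m)
  rw [hasseDeriv_mul, ← add_sum_erase _ _ hm0, hasseDeriv_zero', ν.map_add_eq_of_lt_left,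
    ν.map_mul]
  rw [ν.map_mul]
  refine ν.map_lt_sum (WithTop.add_ne_top.2 ⟨hm.1.2.2.2, hQ.valuation_ne_top hp hpQ⟩)
    fun ⟨j, i⟩ hji => ?_
  obtain ⟨hne, hji⟩ := mem_erase.1 hji
  rw [HasAntidiagonal.mem_antidiagonal] at hji
  have hi : 1 ≤ i := by
    by_contra! h
    obtain rfl : i = 0 := by omega
    exact hne (by simp_all)
  exact hQ.lt_valuation_hasseDeriv_mul_hasseDeriv hng hm hp hpQ hi hji

theorem IsKeyPoly.valuation_hasseDeriv_mul_lt (hQ : IsKeyPoly ν Q) (hng : ¬IsGenSupp ν Q)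
    (hm : IsEpsIdx ν Q m) (hp : p ≠ 0) (hpQ : p.natDegree < Q.natDegree) {r : K[X]}
    (hrQ : r.natDegree < Q.natDegree) (hr : ν (Q * p) ≤ ν r) :
    ν (hasseDeriv m (Q * p)) < ν (hasseDeriv m r) := by
  have hQ' : ν Q ≠ ⊤ := hm.1.2.2.1
  have hmQ : ν (hasseDeriv m Q) ≠ ⊤ := hm.1.2.2.2
  have hp' := hQ.valuation_ne_top hp hpQ
  rw [hQ.valuation_hasseDeriv_mul_eq hng hm hp hpQ]
  rcases eq_or_ne (hasseDeriv m r) 0 with h0 | h0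
  · rw [h0, ν.map_zero]
    exact WithTop.lt_top_iff_ne_top.2 (WithTop.add_ne_top.2 ⟨hmQ, hp'⟩)
  have hr0 : r ≠ 0 := by
    rintro rfl
    exact h0 (map_zero _)
  have hr' := hQ.valuation_ne_top hr0 hrQ
  have hdrop := lt_of_nsmul_lt_nsmul_right m (hQ.nsmul_hasseDrop_lt hng hm hrQ hm.1.1 h0)
  have hQpr : finVal ν Q + finVal ν p ≤ finVal ν r := by
    rwa [← finVal_mul hQ' hp', finVal_le_finVal (valuation_mul_ne_top hQ' hp') hr']
  rw [← coe_finVal hmQ, ← coe_finVal hp',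
    ← coe_finVal (hQ.valuation_hasseDeriv_ne_top hrQ h0), ← WithTop.coe_add, WithTop.coe_lt_coe]
  simp only [hasseDrop] at hdrop
  grind

theorem IsKeyPoly.valuation_mul_lt_valuation_mul_divByMonic (hQ : IsKeyPoly ν Q)
    (hng : ¬IsGenSupp ν Q) {a b : K[X]} (ha : a ≠ 0) (haQ : a.natDegree < Q.natDegree)
    (hb : b ≠ 0) (hbQ : b.natDegree < Q.natDegree) : ν (a * b) < ν (Q * (a * b /ₘ Q)) := by
  obtain ⟨m, hm⟩ := exists_isEpsIdx (hQ.exists_validIdx hng (by omega))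
  have ha' := hQ.valuation_ne_top ha haQ
  have hb' := hQ.valuation_ne_top hb hbQ
  have hQ' : ν Q ≠ ⊤ := hm.1.2.2.1
  have hmQ : ν (hasseDeriv m Q) ≠ ⊤ := hm.1.2.2.2
  have hab := valuation_mul_ne_top ha' hb'
  set q := a * b /ₘ Q
  set r := a * b %ₘ Q
  by_contra! hcon
  have hq : q ≠ 0 := by
    intro hq
    rw [hq, mul_zero, ν.map_zero] at hcon
    exact hab (top_le_iff.1 hcon)
  have hqQ : q.natDegree < Q.natDegree := by
    rw [natDegree_divByMonic _ hQ.1, natDegree_mul ha hb]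
    omega
  have hq' := hQ.valuation_ne_top hq hqQ
  have hrQ : r.natDegree < Q.natDegree :=
    natDegree_modByMonic_lt _ hQ.1 (by rintro rfl; simp at haQ)
  have hr : ν (Q * q) ≤ ν r := by
    rw [show r = a * b - Q * q from modByMonic_eq_sub_mul_div _ _]
    exact ν.map_le_sub hcon le_rfl
  have hdm : ν (hasseDeriv m (a * b)) = ν (hasseDeriv m Q) + ν q := by
    rw [← modByMonic_add_div (a * b) Q, map_add, add_comm,
      ν.map_add_eq_of_lt_left (hQ.valuation_hasseDeriv_mul_lt hng hm hq hqQ hrQ hr),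
      hQ.valuation_hasseDeriv_mul_eq hng hm hq hqQ]
  have hdm' : ν (hasseDeriv m (a * b)) ≠ ⊤ := hdm ▸ WithTop.add_ne_top.2 ⟨hmQ, hq'⟩
  have hdm'' : finVal ν (hasseDeriv m (a * b)) = finVal ν (hasseDeriv m Q) + finVal ν q := by
    rw [← WithTop.coe_inj, WithTop.coe_add, coe_finVal hdm', coe_finVal hmQ, coe_finVal hq', hdm]
  have hcon' : finVal ν Q + finVal ν q ≤ finVal ν a + finVal ν b := by
    rwa [← finVal_mul hQ' hq', ← finVal_mul ha' hb',
      finVal_le_finVal (valuation_mul_ne_top hQ' hq') hab]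
  have hlt := lt_of_nsmul_lt_nsmul_right m
    (hQ.nsmul_hasseDrop_mul_lt hng hm ha haQ hb hbQ hm.1.1 hdm')
  simp only [hasseDrop, finVal_mul ha' hb', hdm''] at hlt
  grind

end KeyPolynomial

section TruncMul

variable {ν : AddValuation K[X] (WithTop Γ)} {Q a f : K[X]}

theorem IsKeyPoly.valuation_mul_modByMonic (hQ : IsKeyPoly ν Q) (hng : ¬IsGenSupp ν Q)
    (haQ : a.natDegree < Q.natDegree) (hfQ : f.natDegree < Q.natDegree) :
    ν (a * f %ₘ Q) = ν (a * f) := by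
  rcases eq_or_ne a 0 with rfl | ha
  · simp
  rcases eq_or_ne f 0 with rfl | hf
  · simp
  rw [modByMonic_eq_sub_mul_div]
  exact ν.map_sub_eq_of_lt_left (hQ.valuation_mul_lt_valuation_mul_divByMonic hng ha haQ hf hfQ)

theorem IsKeyPoly.valuation_mul_le_valuation_mul_divByMonic (hQ : IsKeyPoly ν Q)
    (hng : ¬IsGenSupp ν Q) (haQ : a.natDegree < Q.natDegree) (hfQ : f.natDegree < Q.natDegree) :
    ν (a * f) ≤ ν (Q * (a * f /ₘ Q)) := by
  rcases eq_or_ne a 0 with rfl | ha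
  · simp
  rcases eq_or_ne f 0 with rfl | hf
  · simp
  exact (hQ.valuation_mul_lt_valuation_mul_divByMonic hng ha haQ hf hfQ).le

theorem IsKeyPoly.trunc_mul_of_trunc_mul_divByMonic (hQ : IsKeyPoly ν Q) (hng : ¬IsGenSupp ν Q)
    (haQ : a.natDegree < Q.natDegree)
    (ih : trunc ν Q (a * (f /ₘ Q)) = ν a + trunc ν Q (f /ₘ Q)) :
    trunc ν Q (a * f) = ν a + trunc ν Q f := by
  have hsplit : a * f = a * (f %ₘ Q) %ₘ Q + Q * (a * (f %ₘ Q) /ₘ Q + a * (f /ₘ Q)) := by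
    linear_combination a * (modByMonic_add_div f Q).symm - modByMonic_add_div (a * (f %ₘ Q)) Q
  set f₀ := f %ₘ Q
  set f₁ := f /ₘ Q
  set q := a * f₀ /ₘ Q
  have hf₀ : f₀.natDegree < Q.natDegree :=
    natDegree_modByMonic_lt _ hQ.1 (by rintro rfl; simp at haQ)
  have hq : q.degree < Q.degree := by
    refine degree_lt_degree ?_
    rw [natDegree_divByMonic _ hQ.1]
    have := natDegree_mul_le (p := a) (q := f₀)
    omega
  have hr : ν (a * f₀ %ₘ Q) = ν a + ν f₀ := by
    rw [hQ.valuation_mul_modByMonic hng haQ hf₀, ν.map_mul]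
  have hrq : ν a + ν f₀ ≤ ν Q + ν q := by
    rw [← ν.map_mul, ← ν.map_mul]
    exact hQ.valuation_mul_le_valuation_mul_divByMonic hng haQ hf₀
  have h₁ : min (ν q) (ν a + trunc ν Q f₁) ≤ trunc ν Q (q + a * f₁) := by
    simpa [trunc_of_degree_lt ν hQ.1 hq, ih] using min_trunc_le_trunc_add ν hQ.1 q (a * f₁)
  have h₂ : min (trunc ν Q (q + a * f₁)) (ν q) ≤ ν a + trunc ν Q f₁ := by
    simpa [trunc_of_degree_lt ν hQ.1 hq, ih] using min_trunc_le_trunc_sub ν hQ.1 (q + a * f₁) q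
  rw [hsplit, trunc_add_mul ν hQ.1 (degree_modByMonic_lt _ hQ.1), trunc_eq_min ν hQ.1 f, hr,
    ← min_add_add_left]
  refine le_antisymm (le_min (min_le_left _ _) ?_) (le_min (min_le_left _ _) ?_)
  · rw [add_left_comm]
    rcases min_le_iff.1 h₂ with h | h
    · exact (min_le_right _ _).trans (by gcongr)
    · exact (min_le_left _ _).trans (hrq.trans (by gcongr))
  · calc _ ≤ min (ν Q + ν q) (ν Q + (ν a + trunc ν Q f₁)) :=
          min_le_min hrq (by rw [add_left_comm])
      _ = ν Q + min (ν q) (ν a + trunc ν Q f₁) := min_add_add_left _ _ _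
      _ ≤ ν Q + trunc ν Q (q + a * f₁) := by gcongr

theorem IsKeyPoly.trunc_mul (hQ : IsKeyPoly ν Q) (hng : ¬IsGenSupp ν Q)
    (haQ : a.natDegree < Q.natDegree) (f : K[X]) : trunc ν Q (a * f) = ν a + trunc ν Q f := by
  suffices h : ∀ n (f : K[X]), f.degree < (Q ^ n).degree →
      trunc ν Q (a * f) = ν a + trunc ν Q f by
    refine h (f.natDegree + 1) f (degree_lt_degree ?_)
    rw [hQ.1.natDegree_pow]
    exact (Nat.lt_succ_self _).trans_le (Nat.le_mul_of_pos_right _ (by omega))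
  intro n
  induction n with
  | zero =>
    intro f hf
    obtain rfl : f = 0 := by simpa using hf
    rw [mul_zero, trunc_zero, add_top]
  | succ n ih =>
    intro f hf
    exact hQ.trunc_mul_of_trunc_mul_divByMonic hng haQ (ih _ (degree_divByMonic_lt_pow hQ.1 hf))

theorem IsKeyPoly.trunc_pow (hQ : IsKeyPoly ν Q) (hng : ¬IsGenSupp ν Q)
    (haQ : a.natDegree < Q.natDegree) (s : ℕ) : trunc ν Q (a ^ s) = s • ν a := by
  induction s with
  | zero =>
    rw [pow_zero, zero_smul, ν.map_one.symm]
    exact trunc_of_degree_lt ν hQ.1 (degree_lt_degree (by rw [natDegree_one]; omega))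
  | succ s ih => rw [pow_succ', hQ.trunc_mul hng haQ, ih, succ_nsmul']

end TruncMul

section QExpansionSum

variable {Q h : K[X]} {e : ℕ}

theorem natDegree_sum_C_mul_pow_mul_pow_le (hQ : Q.Monic) (hhQ : h.natDegree ≤ Q.natDegree)
    (he : 0 < e) (b : ℕ → K) (s : ℕ) :
    (∑ i ∈ Finset.range (s + 1), C (b i) * Q ^ (e * i) * h ^ (s - i)).natDegree ≤
      e * s * Q.natDegree := by
  induction s with
  | zero => simp
  | succ s ih =>
    rw [sum_range_mul_pow_sub_succ]
    refine natDegree_add_le_of_degree_le ?_ ?_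
    · refine natDegree_mul_le.trans ?_
      nlinarith
    · refine (natDegree_C_mul_le _ _).trans ?_
      rw [hQ.natDegree_pow, mul_comm e]

variable {ν : AddValuation K[X] (WithTop Γ)}

theorem IsKeyPoly.trunc_sum_C_mul_pow_mul_pow (hQ : IsKeyPoly ν Q) (hng : ¬IsGenSupp ν Q)
    (hhQ : h.natDegree < Q.natDegree) (he : 0 < e) (hval : ν (Q ^ e) = ν h) (b : ℕ → K)
    (s : ℕ) :
    trunc ν Q (∑ i ∈ Finset.range (s + 1), C (b i) * Q ^ (e * i) * h ^ (s - i)) =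
      s • ν h + (Finset.range (s + 1)).inf fun i => ν (C (b i)) := by
  have hC : ∀ c : K, (C c).degree < Q.degree := fun c =>
    degree_lt_degree (by rw [natDegree_C]; omega)
  induction s with
  | zero => simp [trunc_of_degree_lt ν hQ.1 (hC _)]
  | succ s ih =>
    have hdeg : (h * ∑ i ∈ Finset.range (s + 1), C (b i) * Q ^ (e * i) * h ^ (s - i)).degree <
        (Q ^ (e * (s + 1))).degree := by
      refine degree_lt_degree (natDegree_mul_le.trans_lt ?_)
      have := natDegree_sum_C_mul_pow_mul_pow_le hQ.1 hhQ.le he b s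
      rw [hQ.1.natDegree_pow]
      nlinarith
    rw [sum_range_mul_pow_sub_succ, trunc_add_mul_pow ν hQ.1 (hC _) hdeg, hQ.trunc_mul hng hhQ, ih,
      ν.map_mul, pow_mul, ν.map_pow, hval, Finset.range_add_one (n := s + 1), Finset.inf_insert,
      ← add_assoc, ← succ_nsmul', add_comm (ν (C _)), ← min_add_add_left, min_comm]

end QExpansionSum

/-- With `r = Q^e / h`, the residue of `∑ aᵢ rⁱ` vanishes iff
`ν_Q (∑ aᵢ Q^{ei} h^{s-i}) > ν_Q (h^s)`. -/
theorem stmt10 (ν : AddValuation (Polynomial K) (WithTop Γ)) (Q : Polynomial K)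
    (hQ : IsKeyPoly (⇑ν) Q) (e : ℕ) (he : 0 < e) (h : Polynomial K) (hh : h ≠ 0)
    (hdeg : h.natDegree < Q.natDegree) (hval : ν (Q ^ e) = ν h) :
    ∀ (s : ℕ) (b : ℕ → K), (∀ i, i ≤ s → 0 ≤ ν (C (b i))) →
      trunc (⇑ν) Q (h ^ s) <
        trunc (⇑ν) Q (∑ i ∈ Finset.range (s + 1), C (b i) * Q ^ (e * i) * h ^ (s - i)) →
      ∀ i, i ≤ s → 0 < ν (C (b i)) := by
  have hνh : ν h ≠ ⊤ := hQ.valuation_ne_top hh hdeg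
  have hng : ¬IsGenSupp ν Q := fun hgen => hνh (hval ▸ (hgen _).2 (dvd_pow_self Q he.ne'))
  intro s b _ hlt i hi
  rw [hQ.trunc_pow hng hdeg, hQ.trunc_sum_C_mul_pow_mul_pow hng hdeg he hval] at hlt
  exact (pos_of_lt_add_right hlt).trans_le (Finset.inf_le (Finset.mem_range_succ_iff.2 hi))
end
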